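/- arXiv:2104.10537 — 2 statements merged into one kernel-verified Lean document; each statement's English description precedes it below -/
import Mathlib

section
/- Let t > 0 satisfy F(0,t) < G(0,t). Then: (i) every minimizer of y ↦ F(y,0,t) over [0,∞) is strictly positive; and (ii) for every x > 0 with F(x,t) < G(x,t), the velocity satisfies t·u(x,t) ≤ x − y_*(x,t). (Together with the convergence y_*(x,t) → y^*(0,t) > 0 as x → 0+, this yields u(0+,t) < 0.) -/
open MeasureTheory Set Filter

noncomputable def Fpot (ρ0 u0 : ℝ → ℝ) (y x t : ℝ) : ℝ :=
  ∫ η in (0:ℝ)..y, (t * u0 η + η - x) * ρ0 η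

noncomputable def Gpot (ρb ub : ℝ → ℝ) (τ x t : ℝ) : ℝ :=
  ∫ η in (0:ℝ)..τ, (x - ub η * (t - η)) * (ρb η * ub η)

/-- `a` minimizes `f` over `[0, ∞)`. -/
def MinimizesOn (f : ℝ → ℝ) (a : ℝ) : Prop :=
  0 ≤ a ∧ ∀ b, 0 ≤ b → f a ≤ f b

/-- `a` is the smallest minimizer of `f` over `[0, ∞)`. -/
def SmallestMinimizer (f : ℝ → ℝ) (a : ℝ) : Prop :=
  MinimizesOn f a ∧ ∀ b, MinimizesOn f b → a ≤ b

/-- `a` is the largest minimizer of `f` over `[0, ∞)`. -/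
def LargestMinimizer (f : ℝ → ℝ) (a : ℝ) : Prop :=
  MinimizesOn f a ∧ ∀ b, MinimizesOn f b → b ≤ a

/-- `v` is the (attained) minimum value of `f` over `[0, ∞)`. -/
def IsMinValue (f : ℝ → ℝ) (v : ℝ) : Prop :=
  (∃ a, 0 ≤ a ∧ f a = v) ∧ ∀ b, 0 ≤ b → v ≤ f b

/-!
Two minimizers `a ≤ b` of `y ↦ F(y,x,t)` give equal values, so the integral of
`(t u₀(η) + η - x) ρ₀(η)` over `[a, b]` vanishes. On `[a, b]` the factor `η - x` is at least
`a - x` and `ρ₀ > 0`, hence `t ∫ₐᵇ ρ₀ u₀ ≤ (x - a) ∫ₐᵇ ρ₀`, which is `t u ≤ x - y_*` after dividing.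
For (i): both potentials vanish at `0`, so if `0` minimized `F(·,0,t)` then `F(0,t) = 0 ≥ G(0,t)`.
-/

theorem MinimizesOn.apply_eq {f : ℝ → ℝ} {a b : ℝ} (ha : MinimizesOn f a)
    (hb : MinimizesOn f b) : f a = f b :=
  le_antisymm (ha.2 b hb.1) (hb.2 a ha.1)

theorem IsMinValue.eq_of_minimizesOn {f : ℝ → ℝ} {v a : ℝ} (hv : IsMinValue f v)
    (ha : MinimizesOn f a) : f a = v := by
  obtain ⟨⟨c, hc, rfl⟩, hle⟩ := hv
  exact le_antisymm (ha.2 c hc) (hle a ha.1)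

theorem MinimizesOn.pos_of_isMinValue_lt {f g : ℝ → ℝ} {v w y : ℝ} (hy : MinimizesOn f y)
    (hv : IsMinValue f v) (hw : IsMinValue g w) (hvw : v < w) (hgf : g 0 ≤ f 0) : 0 < y := by
  refine lt_of_le_of_ne hy.1 ?_
  rintro rfl
  linarith [hv.eq_of_minimizesOn hy, hw.2 0 le_rfl]

theorem locallyIntegrableOn_Ici_of_abs_le {f : ℝ → ℝ} (hf : Measurable f)
    (hbdd : ∀ K : ℝ, ∃ M : ℝ, ∀ η ∈ Icc (0:ℝ) K, |f η| ≤ M) :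
    LocallyIntegrableOn f (Ici 0) := by
  rw [locallyIntegrableOn_iff isClosed_Ici.isLocallyClosed]
  intro k hk hkc
  obtain ⟨K, hK⟩ := hkc.bddAbove
  obtain ⟨M, hM⟩ := hbdd K
  exact Measure.integrableOn_of_bounded (M := M) hkc.measure_lt_top.ne hf.aestronglyMeasurable
    (ae_restrict_of_forall_mem hkc.measurableSet fun η hη => hM η ⟨hk hη, hK hη⟩)

theorem MeasureTheory.LocallyIntegrableOn.mul_of_abs_le {f g : ℝ → ℝ} {s : Set ℝ} (hs : IsLocallyClosed s)
    (hf : LocallyIntegrableOn f s) (hg : Measurable g) {C : ℝ} (hC : ∀ η ∈ s, |g η| ≤ C) :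
    LocallyIntegrableOn (fun η => f η * g η) s := by
  rw [locallyIntegrableOn_iff hs] at hf ⊢
  intro k hk hkc
  exact (hf k hk hkc).mul_bdd hg.aestronglyMeasurable
    (ae_restrict_of_forall_mem hkc.measurableSet fun η hη => hC η (hk hη))

theorem MeasureTheory.LocallyIntegrableOn.intervalIntegrable_of_nonneg {f : ℝ → ℝ}
    (hf : LocallyIntegrableOn f (Ici 0)) {a b : ℝ} (ha : 0 ≤ a) (hb : 0 ≤ b) :
    IntervalIntegrable f volume a b :=
  (hf.integrableOn_compact_subset (fun _ hη => le_trans (le_inf ha hb) hη.1)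
    isCompact_uIcc).intervalIntegrable

theorem MeasureTheory.LocallyIntegrableOn.potential_integrand {ρ w : ℝ → ℝ}
    (hρ : LocallyIntegrableOn ρ (Ici 0)) (hρw : LocallyIntegrableOn (fun η => ρ η * w η) (Ici 0))
    (t x : ℝ) : LocallyIntegrableOn (fun η => (t * w η + η - x) * ρ η) (Ici 0) := by
  have hsplit : (fun η => (t * w η + η - x) * ρ η)
      = (t • fun η => ρ η * w η) + fun η => (η - x) * ρ η := by
    funext η
    simp only [Pi.add_apply, Pi.smul_apply, smul_eq_mul]
    ring
  rw [hsplit]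
  exact (hρw.smul t).add (hρ.continuousOn_mul (by fun_prop) isClosed_Ici.isLocallyClosed)

theorem integral_eq_zero_of_minimizesOn {f : ℝ → ℝ} (hf : LocallyIntegrableOn f (Ici 0))
    {a b : ℝ} (ha : MinimizesOn (fun y => ∫ η in (0:ℝ)..y, f η) a)
    (hb : MinimizesOn (fun y => ∫ η in (0:ℝ)..y, f η) b) :
    ∫ η in a..b, f η = 0 := by
  rw [← intervalIntegral.integral_interval_sub_left (hf.intervalIntegrable_of_nonneg le_rfl hb.1)
    (hf.intervalIntegrable_of_nonneg le_rfl ha.1)]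
  exact sub_eq_zero.2 (hb.apply_eq ha)

theorem mul_integral_div_integral_le {ρ w : ℝ → ℝ} {a b t x : ℝ} (hab : a < b)
    (hρ : IntervalIntegrable ρ volume a b)
    (hρw : IntervalIntegrable (fun η => ρ η * w η) volume a b)
    (hρ_pos : ∀ η ∈ Icc a b, 0 < ρ η) (h : ∫ η in a..b, (t * w η + η - x) * ρ η = 0) :
    t * ((∫ η in a..b, ρ η * w η) / ∫ η in a..b, ρ η) ≤ x - a := by
  have hshift : IntervalIntegrable (fun η => (η - x) * ρ η) volume a b :=
    hρ.continuousOn_mul (by fun_prop)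
  have hsplit : t * (∫ η in a..b, ρ η * w η) + ∫ η in a..b, (η - x) * ρ η = 0 := by
    rw [← intervalIntegral.integral_const_mul,
      ← intervalIntegral.integral_add (hρw.const_mul t) hshift, ← h]
    exact intervalIntegral.integral_congr fun η _ => by ring
  have hlower : (a - x) * ∫ η in a..b, ρ η ≤ ∫ η in a..b, (η - x) * ρ η := by
    rw [← intervalIntegral.integral_const_mul]
    exact intervalIntegral.integral_mono_on hab.le (hρ.const_mul _) hshift fun η hη =>
      mul_le_mul_of_nonneg_right (by linarith [hη.1]) (hρ_pos η hη).le
  have hmass : 0 < ∫ η in a..b, ρ η :=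
    intervalIntegral.intervalIntegral_pos_of_pos_on hρ
      (fun η hη => hρ_pos η (Ioo_subset_Icc_self hη)) hab
  rw [← mul_div_assoc, div_le_iff₀ hmass]
  linarith

theorem stmt17_general
    (ρ0 u0 ρb ub : ℝ → ℝ)
    (hρ0meas : Measurable ρ0) (hu0meas : Measurable u0)
    (hρ0pos : ∀ η, 0 ≤ η → 0 < ρ0 η)
    (hρ0loc : ∀ K : ℝ, ∃ M : ℝ, ∀ η ∈ Set.Icc (0:ℝ) K, ρ0 η ≤ M)
    (hu0bdd : ∃ M : ℝ, ∀ η, 0 ≤ η → |u0 η| ≤ M)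
    (Fm Gm : ℝ → ℝ → ℝ)
    (hFm : ∀ x t, 0 ≤ x → 0 ≤ t → IsMinValue (fun y => Fpot ρ0 u0 y x t) (Fm x t))
    (hGm : ∀ x t, 0 ≤ x → 0 ≤ t → IsMinValue (fun τ => Gpot ρb ub τ x t) (Gm x t))
    (ys yS : ℝ → ℝ → ℝ)
    (hys : ∀ x t, 0 ≤ x → 0 ≤ t → SmallestMinimizer (fun y => Fpot ρ0 u0 y x t) (ys x t))
    (hyS : ∀ x t, 0 ≤ x → 0 ≤ t → LargestMinimizer (fun y => Fpot ρ0 u0 y x t) (yS x t))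
    (u : ℝ → ℝ → ℝ)
    (hu : ∀ x t, 0 < x → 0 < t → Fm x t < Gm x t →
      (ys x t = yS x t → u x t = (x - ys x t) / t) ∧
      (ys x t < yS x t →
        u x t = (∫ η in ys x t..yS x t, ρ0 η * u0 η) / ∫ η in ys x t..yS x t, ρ0 η))
    (t : ℝ) (ht : 0 < t) (hFG : Fm 0 t < Gm 0 t) :
    (∀ y, MinimizesOn (fun y => Fpot ρ0 u0 y 0 t) y → 0 < y) ∧
    (∀ x, 0 < x → Fm x t < Gm x t → t * u x t ≤ x - ys x t) := by
  refine ⟨fun y hy => hy.pos_of_isMinValue_lt (hFm 0 t le_rfl ht.le) (hGm 0 t le_rfl ht.le) hFG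
    (by simp [Fpot, Gpot]), fun x hx hFGx => ?_⟩
  obtain ⟨hmin, hsmallest⟩ := hys x t hx.le ht.le
  have hmax := (hyS x t hx.le ht.le).1
  rcases (hsmallest _ hmax).eq_or_lt with heq | hlt
  · rw [(hu x t hx ht hFGx).1 heq, mul_div_cancel₀ _ ht.ne']
  obtain ⟨Mu, hMu⟩ := hu0bdd
  have hρ : LocallyIntegrableOn ρ0 (Ici 0) := locallyIntegrableOn_Ici_of_abs_le hρ0meas fun K =>
    (hρ0loc K).imp fun M hM η hη => (abs_of_pos (hρ0pos η hη.1)).trans_le (hM η hη)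
  have hρu : LocallyIntegrableOn (fun η => ρ0 η * u0 η) (Ici 0) :=
    hρ.mul_of_abs_le isClosed_Ici.isLocallyClosed hu0meas hMu
  rw [(hu x t hx ht hFGx).2 hlt]
  exact mul_integral_div_integral_le hlt (hρ.intervalIntegrable_of_nonneg hmin.1 hmax.1)
    (hρu.intervalIntegrable_of_nonneg hmin.1 hmax.1) (fun η hη => hρ0pos η (hmin.1.trans hη.1))
    (integral_eq_zero_of_minimizesOn (hρ.potential_integrand hρu t x) hmin hmax)

theorem stmt17
    (ρ0 u0 ρb ub : ℝ → ℝ)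
    (hρ0meas : Measurable ρ0) (hu0meas : Measurable u0)
    (hρbmeas : Measurable ρb) (hubmeas : Measurable ub)
    (hρ0pos : ∀ η, 0 ≤ η → 0 < ρ0 η)
    (hρbpos : ∀ η, 0 ≤ η → 0 < ρb η)
    (hubpos : ∀ η, 0 ≤ η → 0 < ub η)
    (hρ0loc : ∀ K : ℝ, ∃ M : ℝ, ∀ η ∈ Set.Icc (0:ℝ) K, ρ0 η ≤ M)
    (hρbloc : ∀ K : ℝ, ∃ M : ℝ, ∀ η ∈ Set.Icc (0:ℝ) K, ρb η ≤ M)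
    (hu0bdd : ∃ M : ℝ, ∀ η, 0 ≤ η → |u0 η| ≤ M)
    (hubbdd : ∃ M : ℝ, ∀ η, 0 ≤ η → |ub η| ≤ M)
    (Fm Gm : ℝ → ℝ → ℝ)
    (hFm : ∀ x t, 0 ≤ x → 0 ≤ t → IsMinValue (fun y => Fpot ρ0 u0 y x t) (Fm x t))
    (hGm : ∀ x t, 0 ≤ x → 0 ≤ t → IsMinValue (fun τ => Gpot ρb ub τ x t) (Gm x t))
    (ys yS : ℝ → ℝ → ℝ)
    (hys : ∀ x t, 0 ≤ x → 0 ≤ t → SmallestMinimizer (fun y => Fpot ρ0 u0 y x t) (ys x t))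
    (hyS : ∀ x t, 0 ≤ x → 0 ≤ t → LargestMinimizer (fun y => Fpot ρ0 u0 y x t) (yS x t))
    (u : ℝ → ℝ → ℝ)
    (hu : ∀ x t, 0 < x → 0 < t → Fm x t < Gm x t →
      (ys x t = yS x t → u x t = (x - ys x t) / t) ∧
      (ys x t < yS x t →
        u x t = (∫ η in ys x t..yS x t, ρ0 η * u0 η) / ∫ η in ys x t..yS x t, ρ0 η))
    (t : ℝ) (ht : 0 < t) (hFG : Fm 0 t < Gm 0 t) :
    (∀ y, MinimizesOn (fun y => Fpot ρ0 u0 y 0 t) y → 0 < y) ∧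
    (∀ x, 0 < x → Fm x t < Gm x t → t * u x t ≤ x - ys x t) :=
  stmt17_general ρ0 u0 ρb ub hρ0meas hu0meas hρ0pos hρ0loc hu0bdd Fm Gm hFm hGm ys yS hys hyS u hu t
    ht hFG
end

section
/- Let x > 0, t > 0 and 0 ≤ τ₁ < τ₂ < t, and suppose ∫_{τ₁}^{τ₂} (x − u_b(η)(t − η)) ρ_b(η) u_b(η) dη = 0. Then the mean boundary velocity ū = (∫_{τ₁}^{τ₂} ρ_b(η) u_b(η)² dη)/(∫_{τ₁}^{τ₂} ρ_b(η) u_b(η) dη) satisfies the strict entropy inequalities x/(t − τ₂) > ū > x/(t − τ₁). (This expresses the entropy condition u(x−,t) > u(x,t) > u(x+,t) at a shock generated by the boundary data, where τ₁ = τ_*(x,t) and τ₂ = τ^*(x,t).) -/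
/-!
Write `f = ρ u²`. The vanishing of the boundary potential increment says
`x ∫ ρ u = ∫ (t - η) f(η) dη`. Since `f > 0` on `(τ₁, τ₂)` and `t - τ₂ < t - η < t - τ₁` there,
this integral lies strictly between `(t - τ₂) ∫ f` and `(t - τ₁) ∫ f`; dividing by `∫ ρ u > 0`
gives the two entropy inequalities.
-/

open MeasureTheory Set Filter

namespace intervalIntegral

variable {f g : ℝ → ℝ} {a b c : ℝ}

theorem integral_mul_lt_mul_integral_of_lt (hab : a < b) (hf : IntervalIntegrable f volume a b)
    (hfpos : ∀ η ∈ Ioo a b, 0 < f η) (hg : ContinuousOn g (uIcc a b))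
    (hgc : ∀ η ∈ Ioo a b, g η < c) :
    ∫ η in a..b, g η * f η < c * ∫ η in a..b, f η := by
  have hpos : 0 < ∫ η in a..b, (c - g η) * f η :=
    intervalIntegral_pos_of_pos_on (hf.continuousOn_mul (continuousOn_const.sub hg))
      (fun η hη => mul_pos (sub_pos.2 (hgc η hη)) (hfpos η hη)) hab
  simp only [sub_mul] at hpos
  rw [integral_sub (hf.const_mul c) (hf.continuousOn_mul hg), integral_const_mul] at hpos
  linarith

theorem mul_integral_lt_integral_mul_of_lt (hab : a < b) (hf : IntervalIntegrable f volume a b)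
    (hfpos : ∀ η ∈ Ioo a b, 0 < f η) (hg : ContinuousOn g (uIcc a b))
    (hcg : ∀ η ∈ Ioo a b, c < g η) :
    c * ∫ η in a..b, f η < ∫ η in a..b, g η * f η := by
  have hpos : 0 < ∫ η in a..b, (g η - c) * f η :=
    intervalIntegral_pos_of_pos_on (hf.continuousOn_mul (hg.sub continuousOn_const))
      (fun η hη => mul_pos (sub_pos.2 (hcg η hη)) (hfpos η hη)) hab
  simp only [sub_mul] at hpos
  rw [integral_sub (hf.continuousOn_mul hg) (hf.const_mul c), integral_const_mul] at hpos
  linarith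

end intervalIntegral

theorem intervalIntegrable_of_abs_le {f : ℝ → ℝ} {a b C : ℝ} (hab : a ≤ b) (hf : Measurable f)
    (hC : ∀ η ∈ Icc a b, |f η| ≤ C) : IntervalIntegrable f volume a b := by
  rw [intervalIntegrable_iff_integrableOn_Icc_of_le hab]
  refine Measure.integrableOn_of_bounded (M := C) measure_Icc_lt_top.ne hf.aestronglyMeasurable ?_
  exact (ae_restrict_iff' measurableSet_Icc).2 (.of_forall fun η hη => (Real.norm_eq_abs _).trans_le (hC η hη))

theorem entropy_inequalities_of_integral_eq_zero {ρ u : ℝ → ℝ} {x t τ₁ τ₂ : ℝ}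
    (hτ : τ₁ < τ₂) (hτ₂ : τ₂ < t)
    (hρu : IntervalIntegrable (fun η => ρ η * u η) volume τ₁ τ₂)
    (hρu2 : IntervalIntegrable (fun η => ρ η * u η ^ 2) volume τ₁ τ₂)
    (hρpos : ∀ η ∈ Ioo τ₁ τ₂, 0 < ρ η) (hupos : ∀ η ∈ Ioo τ₁ τ₂, 0 < u η)
    (hzero : (∫ η in τ₁..τ₂, (x - u η * (t - η)) * (ρ η * u η)) = 0) :
    (∫ η in τ₁..τ₂, ρ η * u η ^ 2) / (∫ η in τ₁..τ₂, ρ η * u η) < x / (t - τ₂) ∧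
    x / (t - τ₁) < (∫ η in τ₁..τ₂, ρ η * u η ^ 2) / (∫ η in τ₁..τ₂, ρ η * u η) := by
  set J := ∫ η in τ₁..τ₂, ρ η * u η
  set K := ∫ η in τ₁..τ₂, ρ η * u η ^ 2
  have hJ : 0 < J := intervalIntegral.intervalIntegral_pos_of_pos_on hρu
    (fun η hη => mul_pos (hρpos η hη) (hupos η hη)) hτ
  have hfpos : ∀ η ∈ Ioo τ₁ τ₂, 0 < ρ η * u η ^ 2 :=
    fun η hη => mul_pos (hρpos η hη) (pow_pos (hupos η hη) 2)
  have hcont : ContinuousOn (fun η : ℝ => t - η) (uIcc τ₁ τ₂) := by fun_prop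
  have hxJ : x * J = ∫ η in τ₁..τ₂, (t - η) * (ρ η * u η ^ 2) := by
    have hsplit : (∫ η in τ₁..τ₂, (x - u η * (t - η)) * (ρ η * u η))
        = x * J - ∫ η in τ₁..τ₂, (t - η) * (ρ η * u η ^ 2) := by
      rw [← intervalIntegral.integral_const_mul,
        ← intervalIntegral.integral_sub (hρu.const_mul x) (hρu2.continuousOn_mul hcont)]
      exact intervalIntegral.integral_congr fun η _ => by ring
    linarith
  have hupper : x * J < (t - τ₁) * K := hxJ ▸
    intervalIntegral.integral_mul_lt_mul_integral_of_lt hτ hρu2 hfpos hcont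
      fun η hη => by linarith [hη.1]
  have hlower : (t - τ₂) * K < x * J := hxJ ▸
    intervalIntegral.mul_integral_lt_integral_mul_of_lt hτ hρu2 hfpos hcont
      fun η hη => by linarith [hη.2]
  constructor
  · rw [div_lt_div_iff₀ hJ (by linarith)]
    linarith
  · rw [div_lt_div_iff₀ (by linarith) hJ]
    linarith

theorem stmt18_general
    (ρb ub : ℝ → ℝ)
    (hρbmeas : Measurable ρb) (hubmeas : Measurable ub)
    (hρbpos : ∀ η, 0 ≤ η → 0 < ρb η)
    (hubpos : ∀ η, 0 ≤ η → 0 < ub η)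
    (hρbloc : ∀ K : ℝ, ∃ M : ℝ, ∀ η ∈ Set.Icc (0:ℝ) K, ρb η ≤ M)
    (hubbdd : ∃ M : ℝ, ∀ η, 0 ≤ η → |ub η| ≤ M)
    (x t τ₁ τ₂ : ℝ)
    (hτ₁ : 0 ≤ τ₁) (hτ : τ₁ < τ₂) (hτ₂ : τ₂ < t)
    (hzero : (∫ η in τ₁..τ₂, (x - ub η * (t - η)) * (ρb η * ub η)) = 0) :
    (∫ η in τ₁..τ₂, ρb η * ub η ^ 2) / (∫ η in τ₁..τ₂, ρb η * ub η) < x / (t - τ₂) ∧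
    x / (t - τ₁) < (∫ η in τ₁..τ₂, ρb η * ub η ^ 2) / (∫ η in τ₁..τ₂, ρb η * ub η) := by
  obtain ⟨Mρ, hMρ⟩ := hρbloc τ₂
  obtain ⟨Mu, hMu⟩ := hubbdd
  have hρ : ∀ η ∈ Icc τ₁ τ₂, |ρb η| ≤ Mρ := fun η hη => by
    rw [abs_of_pos (hρbpos η (hτ₁.trans hη.1))]
    exact hMρ η ⟨hτ₁.trans hη.1, hη.2⟩
  have hu : ∀ η ∈ Icc τ₁ τ₂, |ub η| ≤ Mu := fun η hη => hMu η (hτ₁.trans hη.1)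
  have hMρ0 : 0 ≤ Mρ := (abs_nonneg _).trans (hρ τ₁ ⟨le_rfl, hτ.le⟩)
  refine entropy_inequalities_of_integral_eq_zero hτ hτ₂ ?_ ?_
    (fun η hη => hρbpos η (hτ₁.trans hη.1.le)) (fun η hη => hubpos η (hτ₁.trans hη.1.le)) hzero
  · refine intervalIntegrable_of_abs_le (C := Mρ * Mu) hτ.le (hρbmeas.mul hubmeas) fun η hη => ?_
    rw [abs_mul]
    exact mul_le_mul (hρ η hη) (hu η hη) (abs_nonneg _) hMρ0
  · refine intervalIntegrable_of_abs_le (C := Mρ * Mu ^ 2) hτ.le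
      (hρbmeas.mul (hubmeas.pow_const 2)) fun η hη => ?_
    rw [abs_mul, abs_pow]
    exact mul_le_mul (hρ η hη) (pow_le_pow_left₀ (abs_nonneg _) (hu η hη) 2) (by positivity) hMρ0

theorem stmt18
    (ρ0 u0 ρb ub : ℝ → ℝ)
    (hρ0meas : Measurable ρ0) (hu0meas : Measurable u0)
    (hρbmeas : Measurable ρb) (hubmeas : Measurable ub)
    (hρ0pos : ∀ η, 0 ≤ η → 0 < ρ0 η)
    (hρbpos : ∀ η, 0 ≤ η → 0 < ρb η)
    (hubpos : ∀ η, 0 ≤ η → 0 < ub η)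
    (hρ0loc : ∀ K : ℝ, ∃ M : ℝ, ∀ η ∈ Set.Icc (0:ℝ) K, ρ0 η ≤ M)
    (hρbloc : ∀ K : ℝ, ∃ M : ℝ, ∀ η ∈ Set.Icc (0:ℝ) K, ρb η ≤ M)
    (hu0bdd : ∃ M : ℝ, ∀ η, 0 ≤ η → |u0 η| ≤ M)
    (hubbdd : ∃ M : ℝ, ∀ η, 0 ≤ η → |ub η| ≤ M)
    (x t τ₁ τ₂ : ℝ) (hx : 0 < x) (ht : 0 < t)
    (hτ₁ : 0 ≤ τ₁) (hτ : τ₁ < τ₂) (hτ₂ : τ₂ < t)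
    (hzero : (∫ η in τ₁..τ₂, (x - ub η * (t - η)) * (ρb η * ub η)) = 0) :
    (∫ η in τ₁..τ₂, ρb η * ub η ^ 2) / (∫ η in τ₁..τ₂, ρb η * ub η) < x / (t - τ₂) ∧
    x / (t - τ₁) < (∫ η in τ₁..τ₂, ρb η * ub η ^ 2) / (∫ η in τ₁..τ₂, ρb η * ub η) :=
  stmt18_general ρb ub hρbmeas hubmeas hρbpos hubpos hρbloc hubbdd x t τ₁ τ₂ hτ₁ hτ hτ₂ hzero
end
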